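/- φ_⊗ maps A_z^0 into A^0 ⊗ (Z⟨e_0,e_z⟩ ∩ A_z^0). Equivalently, Const(∂_{1,0}(u)) = 0 for all u ∈ A_z^0. -/

import Mathlib

open scoped BigOperators

/-- Letters: `0 ↦ e₀`, `1 ↦ e₁`, `2 ↦ e_z`. -/
abbrev Letter := Fin 3

/-- The free noncommutative ring `𝒜_z = ℤ⟨e₀, e₁, e_z⟩`. -/
abbrev Az := MonoidAlgebra ℤ (FreeMonoid Letter)

/-- The monomial (word) corresponding to a list of letters. -/
noncomputable def wordOf (l : List Letter) : Az :=
  MonoidAlgebra.single (FreeMonoid.ofList l) 1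

/-- The extended sequence `a₀ = 0, a₁, …, a_n, a_{n+1} = 1`. -/
def ext (a : List Letter) (j : ℕ) : Letter :=
  ((0 : Letter) :: a ++ [1]).getD j 1

/-- `∂_{α,β}` on a word. -/
noncomputable def Dword (α β : Letter) (a : List Letter) : Az :=
  ∑ i ∈ Finset.range a.length,
    (((if ({ext a (i + 1), ext a (i + 2)} : Finset Letter) = {α, β} then 1 else 0)
      - (if ({ext a i, ext a (i + 1)} : Finset Letter) = {α, β} then 1 else 0) : ℤ))
      • wordOf (a.eraseIdx i)

/-- The linear operator `∂_{α,β} : 𝒜_z → 𝒜_z`. -/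
noncomputable def del (α β : Letter) : Az →ₗ[ℤ] Az :=
  (Finsupp.lsum ℤ fun w => LinearMap.toSpanSingleton ℤ Az (Dword α β (FreeMonoid.toList w))) ∘ₗ (MonoidAlgebra.coeffLinearEquiv ℤ).toLinearMap

/-- The shuffle product of two words. -/
noncomputable def shuffleWord : List Letter → List Letter → Az
  | [], v => wordOf v
  | u, [] => wordOf u
  | a :: u, b :: v =>
      wordOf [a] * shuffleWord u (b :: v) + wordOf [b] * shuffleWord (a :: u) v
termination_by u v => u.length + v.length

/-- The shuffle product as a bilinear map on `𝒜_z`. -/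
noncomputable def sh : Az →ₗ[ℤ] Az →ₗ[ℤ] Az :=
  (Finsupp.lsum ℤ fun u => LinearMap.toSpanSingleton ℤ (Az →ₗ[ℤ] Az)
    ((Finsupp.lsum ℤ fun v =>
      LinearMap.toSpanSingleton ℤ Az (shuffleWord (FreeMonoid.toList u) (FreeMonoid.toList v))) ∘ₗ (MonoidAlgebra.coeffLinearEquiv ℤ).toLinearMap)) ∘ₗ (MonoidAlgebra.coeffLinearEquiv ℤ).toLinearMap

/-- The (generalized) stuffle product of two words (the left word should lie in `𝒜`). -/
noncomputable def stWord : List Letter → List Letter → Az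
  | [], v => wordOf v
  | u, [] => wordOf u
  | a :: u, b :: v =>
      if a = 0 then wordOf [0] * stWord u (b :: v)
      else if a = 1 then
        wordOf [b] * (stWord u (b :: v) + stWord (a :: u) v - wordOf [0] * stWord u v)
      else 0
termination_by u v => u.length + v.length

/-- The stuffle product as a bilinear map. -/
noncomputable def st : Az →ₗ[ℤ] Az →ₗ[ℤ] Az :=
  (Finsupp.lsum ℤ fun u => LinearMap.toSpanSingleton ℤ (Az →ₗ[ℤ] Az)
    ((Finsupp.lsum ℤ fun v =>
      LinearMap.toSpanSingleton ℤ Az (stWord (FreeMonoid.toList u) (FreeMonoid.toList v))) ∘ₗ (MonoidAlgebra.coeffLinearEquiv ℤ).toLinearMap)) ∘ₗ (MonoidAlgebra.coeffLinearEquiv ℤ).toLinearMap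

/-- `Const` kills every word containing the letter `e_z`. -/
noncomputable def Const : Az →ₗ[ℤ] Az :=
  (Finsupp.lsum ℤ fun w => LinearMap.toSpanSingleton ℤ Az
    (if (2 : Letter) ∈ FreeMonoid.toList w then 0 else wordOf (FreeMonoid.toList w))) ∘ₗ (MonoidAlgebra.coeffLinearEquiv ℤ).toLinearMap

/-- `τ_z` on letters. -/
noncomputable def tauLetter (a : Letter) : Az :=
  if a = 0 then wordOf [2] - wordOf [1]
  else if a = 1 then wordOf [2] - wordOf [0]
  else wordOf [2]

/-- `τ_z` on a word (reversing the word). -/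
noncomputable def tauWord : List Letter → Az
  | [] => 1
  | a :: u => tauWord u * tauLetter a

/-- The duality anti-automorphism `τ_z`. -/
noncomputable def tau : Az →ₗ[ℤ] Az :=
  (Finsupp.lsum ℤ fun w => LinearMap.toSpanSingleton ℤ Az (tauWord (FreeMonoid.toList w))) ∘ₗ (MonoidAlgebra.coeffLinearEquiv ℤ).toLinearMap

/-- `𝒜_z^0`: span of the empty word and of words beginning with `e₁` or `e_z`
and ending in `e₀` or `e_z`. -/
noncomputable def Az0 : Submodule ℤ Az :=
  Submodule.span ℤ {x | ∃ l : List Letter,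
    (l = [] ∨ (l.head? ≠ some 0 ∧ l.getLast? ≠ some 1)) ∧ x = wordOf l}

/-- `𝒜_z^1`: span of the empty word and of words beginning with `e₁` or `e_z`. -/
noncomputable def Az1 : Submodule ℤ Az :=
  Submodule.span ℤ {x | ∃ l : List Letter, l.head? ≠ some 0 ∧ x = wordOf l}

/-- `𝒜 = ℤ⟨e₀, e₁⟩` inside `𝒜_z`. -/
noncomputable def Asub : Submodule ℤ Az :=
  Submodule.span ℤ {x | ∃ l : List Letter, (2 : Letter) ∉ l ∧ x = wordOf l}

/-- `𝒜^1 = ℤ ⊕ e₁𝒜`. -/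
noncomputable def A1sub : Submodule ℤ Az :=
  Submodule.span ℤ {x | ∃ l : List Letter,
    ((2 : Letter) ∉ l ∧ l.head? ≠ some 0 ∧ l.head? ≠ some 2) ∧ x = wordOf l}

/-- `𝒜^0 = ℤ ⊕ e₁𝒜e₀`. -/
noncomputable def A0sub : Submodule ℤ Az :=
  Submodule.span ℤ {x | ∃ l : List Letter,
    ((2 : Letter) ∉ l ∧ (l = [] ∨ (l.head? = some 1 ∧ l.getLast? = some 0))) ∧ x = wordOf l}

/-- `𝒜_z^{-2} = ℤ ⊕ e₁𝒜_z e₀ ⊕ e_z 𝒜_z e₀`. -/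
noncomputable def Azm2 : Submodule ℤ Az :=
  Submodule.span ℤ {x | ∃ l : List Letter,
    (l = [] ∨ (l.head? ≠ some 0 ∧ l.getLast? = some 0)) ∧ x = wordOf l}

/-- `𝒜_z^0 ∩ ℤ⟨e₁, e_z⟩`. -/
noncomputable def Wsub : Submodule ℤ Az :=
  Submodule.span ℤ {x | ∃ l : List Letter,
    ((0 : Letter) ∉ l ∧ (l = [] ∨ l.getLast? = some 2)) ∧ x = wordOf l}

/-- `ℤ⟨e_z⟩`: span of powers of `e_z`. -/
noncomputable def Zez : Submodule ℤ Az :=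
  Submodule.span ℤ {x | ∃ k : ℕ, x = wordOf (List.replicate k 2)}

/-- `𝒜_z^{-1} = 𝒜_z^{-2}·ℤ⟨e_z⟩`. -/
noncomputable def Azm1 : Submodule ℤ Az :=
  Submodule.span ℤ {x | ∃ l : List Letter, ∃ k : ℕ,
    (l = [] ∨ (l.head? ≠ some 0 ∧ l.getLast? = some 0)) ∧ x = wordOf (l ++ List.replicate k 2)}

/-- `ℤ⟨e₀, e_z⟩ ∩ 𝒜_z^0`. -/
noncomputable def Vsub : Submodule ℤ Az :=
  Submodule.span ℤ {x | ∃ l : List Letter,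
    ((1 : Letter) ∉ l ∧ (l = [] ∨ l.head? = some 2)) ∧ x = wordOf l}

/-- All lists of length `r` with entries in `{e₀, e_z}`. -/
def tuples : ℕ → List (List Letter)
  | 0 => [[]]
  | n + 1 => (tuples n).flatMap fun t => [(0 : Letter) :: t, (2 : Letter) :: t]

/-- `∂_{1,b₁} ∘ ⋯ ∘ ∂_{1,b_r}` for `bs = [b₁, …, b_r]`. -/
noncomputable def delChain : List Letter → Az →ₗ[ℤ] Az
  | [] => LinearMap.id
  | b :: bs => (del 1 b).comp (delChain bs)

/-- `∂_{z,α₁} ∘ ⋯ ∘ ∂_{z,α_r}` for `as = [α₁, …, α_r]`. -/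
noncomputable def delZChain : List Letter → Az →ₗ[ℤ] Az
  | [] => LinearMap.id
  | a :: as => (del 2 a).comp (delZChain as)

/-- `φ_⧢` on a word. -/
noncomputable def phiShWord (l : List Letter) : Az :=
  ∑ r ∈ Finset.range (l.length + 1),
    ((tuples r).map fun b => sh (Const (delChain b (wordOf l))) (wordOf b)).sum

/-- `φ_⧢ : 𝒜_z^0 → 𝒜_z^0` (defined on all of `𝒜_z`). -/
noncomputable def phiSh : Az →ₗ[ℤ] Az :=
  (Finsupp.lsum ℤ fun w => LinearMap.toSpanSingleton ℤ Az (phiShWord (FreeMonoid.toList w))) ∘ₗ (MonoidAlgebra.coeffLinearEquiv ℤ).toLinearMap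

/-- `φ_*` on a word. -/
noncomputable def phiStWord (l : List Letter) : Az :=
  ∑ r ∈ Finset.range (l.length + 1),
    ((tuples r).map fun b => st (Const (delChain b (wordOf l))) (wordOf b)).sum

/-- `φ_* : 𝒜_z^0 → 𝒜_z^0` (defined on all of `𝒜_z`). -/
noncomputable def phiSt : Az →ₗ[ℤ] Az :=
  (Finsupp.lsum ℤ fun w => LinearMap.toSpanSingleton ℤ Az (phiStWord (FreeMonoid.toList w))) ∘ₗ (MonoidAlgebra.coeffLinearEquiv ℤ).toLinearMap

/-- `φ_⊗` on a word. -/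
noncomputable def phiTWord (l : List Letter) : TensorProduct ℤ Az Az :=
  ∑ r ∈ Finset.range (l.length + 1),
    ((tuples r).map fun b => (Const (delChain b (wordOf l))) ⊗ₜ[ℤ] (wordOf b)).sum

/-- `φ_⊗ : 𝒜_z^0 → 𝒜^0 ⊗ ℤ⟨e₀, e_z⟩` (defined on all of `𝒜_z`). -/
noncomputable def phiT : Az →ₗ[ℤ] TensorProduct ℤ Az Az :=
  (Finsupp.lsum ℤ fun w => LinearMap.toSpanSingleton ℤ (TensorProduct ℤ Az Az)
    (phiTWord (FreeMonoid.toList w))) ∘ₗ (MonoidAlgebra.coeffLinearEquiv ℤ).toLinearMap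

/-- The `i`-fold shuffle power of `e₁`. -/
noncomputable def e1pow : ℕ → Az
  | 0 => 1
  | n + 1 => sh (wordOf [1]) (e1pow n)

/-- Substitution `z → 1` on words. -/
noncomputable def subst1 : Az →ₗ[ℤ] Az :=
  (Finsupp.lsum ℤ fun w => LinearMap.toSpanSingleton ℤ Az
    (wordOf ((FreeMonoid.toList w).map fun a => if a = 2 then 1 else a))) ∘ₗ (MonoidAlgebra.coeffLinearEquiv ℤ).toLinearMap

/-! `∂_{1,0}` only deletes letters, and the coefficient of a deleted `e_z` vanishes (both pairs
around it contain `e_z`), so `Const ∘ ∂_{1,0}` kills every word containing `e_z`. A word of `𝒜_z^0`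
without `e_z` is `e₁ ⋯ e₀`; for a word `a·t` over `{e₀, e₁}` ending in `e₀`, induction along the
word shows that `∂_{1,0}` taken with left boundary letter `x` equals `[x = a]·t`, which vanishes
for `x = e₀`, `a = e₁`.

Each `∂_{α,β}` preserves `𝒜_z^0`: deleting a letter whose two neighbours agree has coefficient
`0`, and otherwise the first letter stays `≠ e₀` and the last one `≠ e₁`. Hence in `φ_⊗` the
terms with `b₁ = e₀` vanish, the `Const` factors lie in `𝒜^0`, and the remaining tuples
`e_z b₂ ⋯ b_r` lie in `ℤ⟨e₀, e_z⟩ ∩ 𝒜_z^0`. -/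

lemma List.getD_eraseIdx {α : Type*} (l : List α) (d : α) (i j : ℕ) :
    (l.eraseIdx i).getD j d = if j < i then l.getD j d else l.getD (j + 1) d := by
  simp only [List.getD_eq_getElem?_getD, List.getElem?_eraseIdx]
  split_ifs <;> rfl

lemma List.mem_eraseIdx_of_getD_ne {α : Type*} {l : List α} {a d : α} (h : a ∈ l) {i : ℕ}
    (hi : l.getD i d ≠ a) : a ∈ l.eraseIdx i := by
  obtain ⟨j, hj⟩ := List.mem_iff_getElem?.1 h
  refine List.mem_eraseIdx_iff_getElem?.2 ⟨j, ?_, hj⟩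
  rintro rfl
  simp [List.getD_eq_getElem?_getD, hj] at hi

lemma tmul_mem_range_map_subtype {R P Q : Type*} [CommSemiring R] [AddCommMonoid P] [Module R P]
    [AddCommMonoid Q] [Module R Q] {p : Submodule R P} {q : Submodule R Q} {x : P} {y : Q}
    (hx : x ∈ p) (hy : y ∈ q) :
    x ⊗ₜ[R] y ∈ LinearMap.range (TensorProduct.map p.subtype q.subtype) :=
  (TensorProduct.range_mapIncl p q).ge (Submodule.apply_mem_map₂ _ hx hy)

lemma Letter.eq_one_of_ne {x : Letter} (h0 : x ≠ 0) (h2 : x ≠ 2) : x = 1 := by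
  revert x; decide

lemma Letter.eq_zero_of_ne {x : Letter} (h1 : x ≠ 1) (h2 : x ≠ 2) : x = 0 := by
  revert x; decide

lemma pair_eq_one_zero_iff {x y : Letter} (hx : x ≠ 2) (hy : y ≠ 2) :
    ({x, y} : Finset Letter) = {1, 0} ↔ x ≠ y := by
  revert x y; decide

lemma wordOf_cons (a : Letter) (t : List Letter) : wordOf (a :: t) = wordOf [a] * wordOf t := by
  rw [wordOf, wordOf, wordOf, MonoidAlgebra.single_mul_single, one_mul]
  rfl

lemma lsum_coeff_wordOf {M : Type*} [AddCommMonoid M] [Module ℤ M] (F : List Letter → M)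
    (l : List Letter) :
    ((Finsupp.lsum ℤ fun w : FreeMonoid Letter => LinearMap.toSpanSingleton ℤ M (F w.toList)) ∘ₗ
      (MonoidAlgebra.coeffLinearEquiv ℤ).toLinearMap) (wordOf l) = F l := by
  simp [wordOf, MonoidAlgebra.coeffLinearEquiv]

lemma del_wordOf (α β : Letter) (l : List Letter) : del α β (wordOf l) = Dword α β l :=
  lsum_coeff_wordOf _ l

lemma Const_wordOf (l : List Letter) :
    Const (wordOf l) = if (2 : Letter) ∈ l then 0 else wordOf l :=
  lsum_coeff_wordOf (fun l => if (2 : Letter) ∈ l then 0 else wordOf l) l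

lemma phiT_wordOf (l : List Letter) : phiT (wordOf l) = phiTWord l :=
  lsum_coeff_wordOf _ l

lemma one_not_mem_of_mem_tuples {r : ℕ} {b : List Letter} (hb : b ∈ tuples r) :
    (1 : Letter) ∉ b := by
  induction r generalizing b with
  | zero => simp_all [tuples]
  | succ r ih =>
    simp only [tuples, List.mem_flatMap, List.mem_cons, List.not_mem_nil, or_false] at hb
    obtain ⟨t, ht, rfl | rfl⟩ := hb <;> simp [ih ht]

lemma ext_succ (l : List Letter) (i : ℕ) : ext l (i + 1) = l.getD i 1 := by
  rw [ext, List.cons_append, List.getD_cons_succ]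
  by_cases h : i < l.length
  · exact List.getD_append _ _ _ _ h
  · rw [List.getD_append_right _ _ _ _ (not_lt.1 h), List.getD_eq_default _ _ (not_lt.1 h),
      List.getD_eq_getElem?_getD, List.getElem?_getD_singleton_default_eq]

lemma ext_eraseIdx (l : List Letter) (i j : ℕ) :
    ext (l.eraseIdx i) j = if j ≤ i then ext l j else ext l (j + 1) := by
  cases j with
  | zero => simp [ext]
  | succ j =>
    rw [ext_succ, List.getD_eraseIdx, ext_succ, ext_succ]
    simp only [Nat.lt_iff_add_one_le]

def Az0Word (l : List Letter) : Prop :=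
  l = [] ∨ (l.head? ≠ some 0 ∧ l.getLast? ≠ some 1)

lemma Az0_le_comap_of_wordOf {M : Type*} [AddCommMonoid M] [Module ℤ M] {f : Az →ₗ[ℤ] M}
    {N : Submodule ℤ M} (h : ∀ l, Az0Word l → f (wordOf l) ∈ N) : Az0 ≤ N.comap f :=
  Submodule.span_le.mpr <| by rintro _ ⟨l, hl, rfl⟩; exact h l hl

lemma az0Word_iff_ext (l : List Letter) :
    Az0Word l ↔ ext l 1 ≠ 0 ∧ ext l l.length ≠ 1 := by
  cases l with
  | nil => simp [Az0Word, ext]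
  | cons a t => simp [Az0Word, ext_succ, List.getLast?_eq_getElem?, List.getD_eq_getElem?_getD]

lemma Az0Word.eq_nil_or_one_zero {l : List Letter} (hl : Az0Word l) (h2 : (2 : Letter) ∉ l) :
    l = [] ∨ (l.head? = some 1 ∧ l.getLast? = some 0) := by
  cases l with
  | nil => exact .inl rfl
  | cons a t =>
    have hne := List.cons_ne_nil a t
    obtain ⟨h0, h1⟩ := hl.resolve_left hne
    rw [List.head?_cons, List.getLast?_eq_some_getLast hne] at *
    refine .inr ⟨congrArg some (Letter.eq_one_of_ne ?_ ?_),
      congrArg some (Letter.eq_zero_of_ne ?_ ?_)⟩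
    · exact fun h => h0 (congrArg some h)
    · exact fun h => h2 (h ▸ List.mem_cons_self)
    · exact fun h => h1 (congrArg some h)
    · exact fun h => h2 (h ▸ List.getLast_mem hne)

lemma az0Word_eraseIdx {l : List Letter} (hl : Az0Word l) {i : ℕ} (hi : i < l.length)
    (hne : ext l i ≠ ext l (i + 2)) : Az0Word (l.eraseIdx i) := by
  rw [az0Word_iff_ext] at hl ⊢
  rw [List.length_eraseIdx_of_lt hi, ext_eraseIdx, ext_eraseIdx]
  constructor
  · split_ifs with h
    · exact hl.1
    · obtain rfl : i = 0 := by omega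
      exact hne.symm
  · split_ifs with h
    · obtain rfl : i = l.length - 1 := by omega
      rwa [show l.length - 1 + 2 = l.length + 1 by omega, ext_succ,
        List.getD_eq_default _ _ le_rfl] at hne
    · rw [show l.length - 1 + 1 = l.length by omega]
      exact hl.2

lemma Dword_mem_Az0 (α β : Letter) {l : List Letter} (hl : Az0Word l) : Dword α β l ∈ Az0 := by
  refine Submodule.sum_mem _ fun i hi => ?_
  by_cases h : ext l i = ext l (i + 2)
  · rw [h, Finset.pair_comm, sub_self, zero_smul]
    exact zero_mem _
  · exact Submodule.smul_mem _ _ <|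
      Submodule.subset_span ⟨_, az0Word_eraseIdx hl (Finset.mem_range.1 hi) h, rfl⟩

lemma Az0_le_comap_del (α β : Letter) : Az0 ≤ Az0.comap (del α β) :=
  Az0_le_comap_of_wordOf fun l hl => by rw [del_wordOf]; exact Dword_mem_Az0 α β hl

lemma Az0_le_comap_delChain (bs : List Letter) : Az0 ≤ Az0.comap (delChain bs) := by
  induction bs with
  | nil => exact fun u hu => hu
  | cons b bs ih => exact fun u hu => Az0_le_comap_del 1 b (ih hu)

lemma Const_mem_A0sub_of_mem_Az0 {u : Az} (hu : u ∈ Az0) : Const u ∈ A0sub :=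
  Az0_le_comap_of_wordOf (f := Const) (N := A0sub) (fun l hl => by
    rw [Const_wordOf]
    split_ifs with h2
    · exact zero_mem _
    · exact Submodule.subset_span ⟨l, ⟨h2, hl.eq_nil_or_one_zero h2⟩, rfl⟩) hu

noncomputable def DwordFrom (α β x : Letter) (a : List Letter) : Az :=
  ∑ i ∈ Finset.range a.length,
    (((if ({(x :: a ++ [1]).getD (i + 1) 1, (x :: a ++ [1]).getD (i + 2) 1} : Finset Letter)
        = {α, β} then 1 else 0)
      - (if ({(x :: a ++ [1]).getD i 1, (x :: a ++ [1]).getD (i + 1) 1} : Finset Letter)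
        = {α, β} then 1 else 0) : ℤ))
      • wordOf (a.eraseIdx i)

lemma Dword_eq_DwordFrom (α β : Letter) (a : List Letter) : Dword α β a = DwordFrom α β 0 a := rfl

lemma DwordFrom_nil (α β x : Letter) : DwordFrom α β x [] = 0 := rfl

lemma DwordFrom_cons (α β x a : Letter) (t : List Letter) :
    DwordFrom α β x (a :: t) =
      ((if ({a, t.headD 1} : Finset Letter) = {α, β} then 1 else 0)
        - (if ({x, a} : Finset Letter) = {α, β} then 1 else 0) : ℤ) • wordOf t
      + wordOf [a] * DwordFrom α β a t := by
  rw [DwordFrom, List.length_cons, Finset.sum_range_succ', add_comm, DwordFrom, Finset.mul_sum]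
  congr 1
  · cases t <;> rfl
  · refine Finset.sum_congr rfl fun i _ => ?_
    rw [List.eraseIdx_cons_succ, wordOf_cons, mul_smul_comm]
    rfl

lemma DwordFrom_one_zero_cons {x a : Letter} {t : List Letter} (hx : x ≠ 2)
    (h2 : (2 : Letter) ∉ a :: t) (hlast : (a :: t).getLast? = some 0) :
    DwordFrom 1 0 x (a :: t) = if x = a then wordOf t else 0 := by
  induction t generalizing x a with
  | nil =>
    obtain rfl : a = 0 := by simpa using hlast
    rw [DwordFrom_cons, DwordFrom_nil]
    simp only [pair_eq_one_zero_iff hx (by decide : (0 : Letter) ≠ 2)]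
    by_cases h : x = 0 <;> simp [h, Finset.pair_comm (0 : Letter) 1]
  | cons b t ih =>
    have ha : a ≠ 2 := fun h => h2 (h ▸ List.mem_cons_self)
    have h2' : (2 : Letter) ∉ b :: t := fun h => h2 (List.mem_cons_of_mem _ h)
    have hb : b ≠ 2 := fun h => h2' (h ▸ List.mem_cons_self)
    rw [DwordFrom_cons, ih ha h2' (by simpa using hlast), List.headD_cons]
    simp only [pair_eq_one_zero_iff ha hb, pair_eq_one_zero_iff hx ha]
    by_cases hab : a = b
    · subst hab
      by_cases hxa : x = a <;> simp [hxa, ← wordOf_cons]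
    · by_cases hxa : x = a <;> simp [hxa, hab]

lemma Const_Dword_one_zero {l : List Letter} (hl : Az0Word l) : Const (Dword 1 0 l) = 0 := by
  by_cases h2 : (2 : Letter) ∈ l
  · refine (map_sum _ _ _).trans <| Finset.sum_eq_zero fun i _ => ?_
    rw [map_zsmul, Const_wordOf]
    by_cases hi : l.getD i 1 = 2
    · have pair_two_ne : ∀ x : Letter,
          ({x, 2} : Finset Letter) ≠ {1, 0} ∧ ({2, x} : Finset Letter) ≠ {1, 0} := by
        decide
      rw [← ext_succ] at hi
      simp [hi, pair_two_ne]
    · rw [if_pos (List.mem_eraseIdx_of_getD_ne h2 hi), smul_zero]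
  · cases l with
    | nil => rfl
    | cons a t =>
      obtain ⟨hhead, hlast⟩ := (hl.eq_nil_or_one_zero h2).resolve_left (List.cons_ne_nil a t)
      obtain rfl : a = 1 := by simpa using hhead
      rw [Dword_eq_DwordFrom, DwordFrom_one_zero_cons (by decide) h2 hlast]
      simp

lemma Const_del_one_zero_of_mem_Az0 {u : Az} (hu : u ∈ Az0) : Const (del 1 0 u) = 0 :=
  (Submodule.mem_bot ℤ).1 <| Az0_le_comap_of_wordOf (f := Const ∘ₗ del 1 0) (N := ⊥)
    (fun l hl => by
      rw [Submodule.mem_bot, LinearMap.comp_apply, del_wordOf]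
      exact Const_Dword_one_zero hl) hu

lemma phiT_wordOf_mem_range {l : List Letter} (hl : Az0Word l) :
    phiT (wordOf l) ∈ LinearMap.range (TensorProduct.map A0sub.subtype Vsub.subtype) := by
  have hw : wordOf l ∈ Az0 := Submodule.subset_span ⟨l, hl, rfl⟩
  rw [phiT_wordOf, phiTWord]
  refine Submodule.sum_mem _ fun r _ => list_sum_mem fun _ hy => ?_
  obtain ⟨b, hb, rfl⟩ := List.mem_map.1 hy
  have hConst := Const_mem_A0sub_of_mem_Az0 (Az0_le_comap_delChain b hw)
  rcases b with _ | ⟨c, bs⟩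
  · exact tmul_mem_range_map_subtype hConst (Submodule.subset_span ⟨[], ⟨by simp, .inl rfl⟩, rfl⟩)
  have h1 := one_not_mem_of_mem_tuples hb
  by_cases hc : c = 2
  · subst hc
    exact tmul_mem_range_map_subtype hConst (Submodule.subset_span ⟨_, ⟨h1, .inr rfl⟩, rfl⟩)
  · obtain rfl := Letter.eq_zero_of_ne (fun h => h1 (h ▸ List.mem_cons_self)) hc
    rw [show Const (delChain (0 :: bs) (wordOf l)) = 0 from
      Const_del_one_zero_of_mem_Az0 (Az0_le_comap_delChain bs hw), TensorProduct.zero_tmul]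
    exact zero_mem _

/-- `φ_⊗` maps `𝒜_z^0` into `𝒜^0 ⊗ (ℤ⟨e₀,e_z⟩ ∩ 𝒜_z^0)`;
equivalently `Const(∂_{1,0}(u)) = 0` for all `u ∈ 𝒜_z^0`. -/
theorem stmt_16 :
    (∀ w ∈ Az0, phiT w ∈
      LinearMap.range (TensorProduct.map A0sub.subtype Vsub.subtype)) ∧
    ∀ u ∈ Az0, Const (del 1 0 u) = 0 :=
  ⟨fun _ hw => Az0_le_comap_of_wordOf (fun _ hl => phiT_wordOf_mem_range hl) hw,
    fun _ hu => Const_del_one_zero_of_mem_Az0 hu⟩
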